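/- In the automaton A_d(n), the set function τ induced on subsets satisfies: there is a path Q_0^i, Q_1^i, ..., Q_{d^i−1}^i in the power automaton whose transitions are labeled by the consecutive letters of w_i; equivalently, applying w_i to Q_0^i = {q_0^1,...,q_0^i} yields Q_{d^i−1}^i = {q_{d-1}^1,...,q_{d-1}^i}, passing through Q_r^i for every r (where Q_r^i encodes the base-d digits of r). -/

import Mathlib

/-!
The word `w_m` is a ruler sequence: its letter at position `r` is `b_{ν+1}`, where `ν` is the
`d`-adic valuation of `r + 1` (`padicValNat d` makes sense for every base `d > 1`). Reading
`b_{ν+1}` in `Q_r^m` performs one base-`d` increment: the `ν` lowest digits of `r`, all equal to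
`d - 1`, wrap around to `0`, the next digit goes up by one, and the higher digits are untouched.
Induction on `r` then traces the path `Q_0^m, Q_1^m, …`.
-/

/-- Alphabet of `A_d(n)`: letter `a`, letters `b_i` and letters `c_i`. -/
inductive LA | a | b (i : ℕ) | c (i : ℕ)
deriving DecidableEq

/-- Partial transition function of `A_d(n)` with `n = d·k`; the state `q_j^i` is
encoded as the pair `(i, j)` with `1 ≤ i ≤ k` and `0 ≤ j ≤ d-1`. -/
def δAn (d k : ℕ) : ℕ × ℕ → LA → Option (ℕ × ℕ) := fun p x =>
  if ¬(1 ≤ p.1 ∧ p.1 ≤ k ∧ p.2 < d) then none else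
  match x with
  | LA.a => some (p.1, 0)
  | LA.b l =>
      if ¬(1 ≤ l ∧ l ≤ k) then none
      else if p.1 = l then (if p.2 + 1 < d then some (p.1, p.2 + 1) else none)
      else if l < p.1 then some (p.1, p.2)
      else if p.2 = d - 1 then some (p.1, 0) else none
  | LA.c l =>
      if ¬(2 ≤ l ∧ l ≤ k) then none
      else if p.2 ≠ d - 1 then none
      else if l = p.1 then some (p.1 - 1, 0)
      else if p.1 < l then some (p.1, 0)
      else none

/-- The word `w_i`: `w_0 = ε`, `w_{i+1} = (w_i b_{i+1})^{d-1} w_i`. -/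
def wordA (d : ℕ) : ℕ → List LA
  | 0 => []
  | i + 1 => (List.replicate (d - 1) (wordA d i ++ [LA.b (i + 1)])).flatten ++ wordA d i

/-- `Q_r^m`: the set `{q_{j_1}^1, …, q_{j_m}^m}` where `(j_m,…,j_1)` are the base-`d`
digits of `r`. -/
def Qset (d m r : ℕ) : Finset (ℕ × ℕ) :=
  (Finset.Icc 1 m).image (fun i => (i, r / d ^ (i - 1) % d))

/-- One step of the power automaton. -/
def stepSet {Q A : Type*} [DecidableEq Q] (δ : Q → A → Option Q)
    (S : Finset Q) (x : A) : Option (Finset Q) :=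
  if ∀ q ∈ S, (δ q x).isSome then some (S.biUnion fun q => (δ q x).toFinset)
  else none

/-- Run of the power automaton on a word. -/
def runSet {Q A : Type*} [DecidableEq Q] (δ : Q → A → Option Q)
    (S : Finset Q) (w : List A) : Option (Finset Q) :=
  List.foldlM (stepSet δ) S w

namespace Nat

theorem padicValNat_eq_of_forall_pow_dvd_iff {p a b : ℕ} (hp : p ≠ 1) (ha : a ≠ 0) (hb : b ≠ 0)
    (h : ∀ k, p ^ k ∣ a ↔ p ^ k ∣ b) : padicValNat p a = padicValNat p b := by
  refine le_antisymm ?_ ?_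
  · exact (pow_dvd_iff_le_padicValNat hp hb).mp ((h _).mp pow_padicValNat_dvd)
  · exact (pow_dvd_iff_le_padicValNat hp ha).mp ((h _).mpr pow_padicValNat_dvd)

theorem padicValNat_mod_pow {p n m : ℕ} (hp : 1 < p) (hn : n % p ^ m ≠ 0) :
    padicValNat p (n % p ^ m) = padicValNat p n := by
  refine padicValNat_eq_of_forall_pow_dvd_iff hp.ne' hn (fun h => hn (by simp [h])) fun k => ?_
  rcases le_or_gt k m with hkm | hmk
  · exact Nat.dvd_mod_iff (Nat.pow_dvd_pow p hkm)
  · have hm : p ^ m ∣ p ^ k := Nat.pow_dvd_pow p hmk.le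
    refine iff_of_false (fun h => ?_) (fun h => hn (Nat.mod_eq_zero_of_dvd (hm.trans h)))
    have := Nat.le_of_dvd (Nat.pos_of_ne_zero hn) h
    have := Nat.mod_lt n (by positivity : 0 < p ^ m)
    have := Nat.pow_lt_pow_right hp hmk
    omega

theorem padicValNat_pow_mul_of_lt {p m q : ℕ} (hp : 1 < p) (hq0 : q ≠ 0) (hqp : q < p) :
    padicValNat p (p ^ m * q) = m := by
  rw [padicValNat_base_pow_mul hp hq0, padicValNat.eq_zero_of_not_dvd
    (fun h => absurd (Nat.le_of_dvd (Nat.pos_of_ne_zero hq0) h) (by omega)), zero_add]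

variable {d r j : ℕ}

theorem div_pow_mod_of_pow_succ_dvd_succ (hd : 0 < d) (h : d ^ (j + 1) ∣ r + 1) :
    r / d ^ j % d = d - 1 ∧ (r + 1) / d ^ j % d = 0 := by
  rw [pow_succ] at h
  have hsucc : (r + 1) / d ^ j = r / d ^ j + 1 := succ_div_of_dvd (dvd_of_mul_right_dvd h)
  have hdvd : d ∣ r / d ^ j + 1 := hsucc ▸ Nat.dvd_div_of_mul_dvd h
  obtain ⟨e, rfl⟩ : ∃ e, d = e + 1 := ⟨d - 1, by omega⟩
  rw [hsucc, Nat.mod_eq_zero_of_dvd hdvd, add_tsub_cancel_right,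
    ← Nat.succ_mod_succ_eq_zero_iff, Nat.mod_eq_zero_of_dvd hdvd]
  exact ⟨rfl, rfl⟩

theorem succ_mod_of_not_dvd {x : ℕ} (h : ¬ d ∣ x + 1) : (x + 1) % d = x % d + 1 := by
  rcases Nat.eq_zero_or_pos d with rfl | hd
  · simp
  have hx : x + 1 = d * (x / d) + (x % d + 1) := by rw [← add_assoc, Nat.div_add_mod]
  have hlt : x % d + 1 < d := by
    refine lt_of_le_of_ne (Nat.mod_lt x hd) fun heq => h ?_
    rw [hx, heq, ← Nat.mul_succ]
    exact Nat.dvd_mul_right d _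
  rw [hx, Nat.mul_add_mod, Nat.mod_eq_of_lt hlt]

theorem succ_div_pow_mod_of_exact_dvd (h1 : d ^ j ∣ r + 1) (h2 : ¬ d ^ (j + 1) ∣ r + 1) :
    (r + 1) / d ^ j % d = r / d ^ j % d + 1 := by
  have hsucc : (r + 1) / d ^ j = r / d ^ j + 1 := succ_div_of_dvd h1
  refine hsucc ▸ succ_mod_of_not_dvd fun h => h2 ?_
  rw [pow_succ]
  exact Nat.mul_dvd_of_dvd_div h1 (hsucc ▸ h)

end Nat

theorem List.getElem?_flatten_replicate {α : Type*} (l : List α) {n i : ℕ}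
    (hi : i < n * l.length) : (List.replicate n l).flatten[i]? = l[i % l.length]? := by
  induction n generalizing i with
  | zero => simp at hi
  | succ n ih =>
    rw [List.replicate_succ, List.flatten_cons]
    rcases lt_or_ge i l.length with hil | hli
    · rw [List.getElem?_append_left hil, Nat.mod_eq_of_lt hil]
    · rw [List.getElem?_append_right hli, ih (by rw [Nat.succ_mul] at hi; omega),
        ← Nat.mod_eq_sub_mod hli]

theorem wordA_succ_append {d : ℕ} (hd : 0 < d) (m : ℕ) :
    wordA d (m + 1) ++ [LA.b (m + 1)] =
      (List.replicate d (wordA d m ++ [LA.b (m + 1)])).flatten := by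
  obtain ⟨e, rfl⟩ : ∃ e, d = e + 1 := ⟨d - 1, by omega⟩
  rw [wordA, List.replicate_succ', List.flatten_append, List.append_assoc]
  simp

theorem wordA_length {d : ℕ} (hd : 0 < d) (m : ℕ) : (wordA d m).length = d ^ m - 1 := by
  induction m with
  | zero => rfl
  | succ m ih =>
    have h := congrArg List.length (wordA_succ_append hd m)
    simp only [List.length_append, List.length_singleton, List.length_flatten, List.map_replicate,
      List.sum_replicate, ih, smul_eq_mul, Nat.sub_add_cancel (Nat.pow_pos hd)] at h
    rw [pow_succ, mul_comm, ← h, Nat.add_sub_cancel]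

theorem wordA_getElem? {d : ℕ} (hd : 1 < d) {m r : ℕ} (hr : r + 1 < d ^ m) :
    (wordA d m)[r]? = some (LA.b (padicValNat d (r + 1) + 1)) := by
  induction m generalizing r with
  | zero => simp at hr
  | succ m ih =>
    set L := d ^ m
    have hL : 0 < L := Nat.pow_pos (by omega)
    have hrL : r + 1 < L * d := by rwa [pow_succ] at hr
    have hlen : (wordA d m).length = L - 1 := wordA_length (by omega) m
    have hu : (wordA d m ++ [LA.b (m + 1)]).length = L := by simp [hlen]; omega
    have hsL : r % L < L := Nat.mod_lt r hL
    have hletter : (wordA d (m + 1))[r]? = (wordA d m ++ [LA.b (m + 1)])[r % L]? := by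
      have hr' : r < (wordA d (m + 1)).length := by rw [wordA_length (by omega)]; omega
      rw [← List.getElem?_append_left hr', wordA_succ_append (by omega),
        List.getElem?_flatten_replicate _ (by rw [hu, mul_comm]; omega), hu]
    rw [hletter]
    rcases Nat.lt_or_ge (r % L + 1) L with hlt | hge
    · have h1 : 1 % L = 1 := Nat.mod_eq_of_lt (by omega)
      have hmod : (r + 1) % L = r % L + 1 := by
        rw [Nat.add_mod_of_add_mod_lt (by rwa [h1]), h1]
      have hs : r % L < (wordA d m).length := by omega
      rw [List.getElem?_append_left hs, ih hlt, ← hmod,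
        Nat.padicValNat_mod_pow hd (hmod ▸ Nat.succ_ne_zero _)]
    · have hs : r % L = L - 1 := by omega
      have hq : r + 1 = L * (r / L + 1) := by
        have := Nat.div_add_mod r L
        rw [mul_add_one]
        omega
      have hqd : r / L + 1 < d := by
        rw [hq] at hrL
        exact Nat.lt_of_mul_lt_mul_left hrL
      rw [hs, List.getElem?_append_right hlen.le, hlen, Nat.sub_self, hq,
        Nat.padicValNat_pow_mul_of_lt hd (Nat.succ_ne_zero _) hqd]
      rfl

theorem δAn_digit_succ {d k i r : ℕ} (hd : 1 < d) (hi : 1 ≤ i) (hik : i ≤ k)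
    (htk : padicValNat d (r + 1) < k) :
    δAn d k (i, r / d ^ (i - 1) % d) (LA.b (padicValNat d (r + 1) + 1)) =
      some (i, (r + 1) / d ^ (i - 1) % d) := by
  set t := padicValNat d (r + 1)
  have hdvd : ∀ j, d ^ j ∣ r + 1 ↔ j ≤ t := fun j =>
    Nat.pow_dvd_iff_le_padicValNat hd.ne' (Nat.succ_ne_zero r)
  have hdigit : r / d ^ (i - 1) % d < d := Nat.mod_lt _ (by omega)
  simp only [δAn, hi, hik, hdigit, and_self, not_true_eq_false, if_false,
    show 1 ≤ t + 1 ∧ t + 1 ≤ k from ⟨by omega, by omega⟩]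
  rcases lt_trichotomy (i - 1) t with hlt | heq | hgt
  · obtain ⟨hmax, hzero⟩ := Nat.div_pow_mod_of_pow_succ_dvd_succ (by omega) ((hdvd _).mpr hlt)
    rw [if_neg (by omega), if_neg (by omega), if_pos hmax, hzero]
  · have hsucc := Nat.succ_div_pow_mod_of_exact_dvd ((hdvd _).mpr heq.le)
      (fun h => absurd ((hdvd _).mp h) (by omega))
    have hlt : (r + 1) / d ^ (i - 1) % d < d := Nat.mod_lt _ (by omega)
    rw [if_pos (by omega), if_pos (by omega), hsucc]
  · rw [if_neg (by omega), if_pos (by omega),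
      Nat.succ_div_of_not_dvd (fun h => absurd ((hdvd _).mp h) (by omega))]

section PowerAutomaton

variable {Q A : Type*} [DecidableEq Q] (δ : Q → A → Option Q)

theorem stepSet_eq_some_image (S : Finset Q) (x : A) (f : Q → Q)
    (h : ∀ q ∈ S, δ q x = some (f q)) : stepSet δ S x = some (S.image f) := by
  rw [stepSet, if_pos fun q hq => by simp [h q hq]]
  congr 1
  ext y
  simp only [Finset.mem_biUnion, Option.mem_toFinset, Option.mem_def, Finset.mem_image]
  exact exists_congr fun q => and_congr_right fun hq => by rw [h q hq, Option.some_inj]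

theorem runSet_append_singleton (S : Finset Q) (w : List A) (x : A) :
    runSet δ S (w ++ [x]) = (runSet δ S w).bind (stepSet δ · x) := by
  simp [runSet, List.foldlM_append]

end PowerAutomaton

theorem stepSet_Qset_succ {d k m r : ℕ} (hd : 1 < d) (hmk : m ≤ k) (hr : r + 1 < d ^ m) :
    stepSet (δAn d k) (Qset d m r) (LA.b (padicValNat d (r + 1) + 1)) =
      some (Qset d m (r + 1)) := by
  have htm : padicValNat d (r + 1) < m := by
    have := Nat.le_of_dvd (by omega : 0 < r + 1) (pow_padicValNat_dvd (p := d))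
    exact (Nat.pow_lt_pow_iff_right hd).mp (by omega)
  rw [Qset, stepSet_eq_some_image _ _ _ fun p => (p.1, (r + 1) / d ^ (p.1 - 1) % d),
    Finset.image_image, Qset]
  · rfl
  · simp only [Finset.mem_image, Finset.mem_Icc]
    rintro _ ⟨i, ⟨hi, him⟩, rfl⟩
    exact δAn_digit_succ hd hi (by omega) (by omega)

theorem wordA_labels_counting_path_general (d k : ℕ) (hd : 1 < d) (m : ℕ)
    (hmk : m ≤ k) (r : ℕ) (hr : r ≤ d ^ m - 1) :
    runSet (δAn d k) (Qset d m 0) ((wordA d m).take r) = some (Qset d m r) := by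
  induction r with
  | zero => rfl
  | succ r ih =>
    have hr1 : r + 1 < d ^ m := by have := Nat.pow_pos (n := m) (by omega : 0 < d); omega
    rw [List.take_add_one, wordA_getElem? hd hr1, Option.toList_some, runSet_append_singleton,
      ih (by omega), Option.bind_some, stepSet_Qset_succ hd hmk hr1]

/-- Lemma 1: the word `w_m` labels the path `Q_0^m, Q_1^m, …, Q_{d^m-1}^m` in the
power automaton of `A_d(n)`: after reading the first `r` letters of `w_m` the set
`Q_0^m` is taken exactly to `Q_r^m`. -/
theorem wordA_labels_counting_path (d k : ℕ) (hd : 1 < d) (m : ℕ)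
    (hm1 : 1 ≤ m) (hmk : m ≤ k) (r : ℕ) (hr : r ≤ d ^ m - 1) :
    runSet (δAn d k) (Qset d m 0) ((wordA d m).take r) = some (Qset d m r) :=
  wordA_labels_counting_path_general d k hd m hmk r hr
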